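/- (Bound on the marginal-likelihood functional below the true smoothness, used in Lemma 1.) For every σ, β, M > 0 there exist C > 0 and K > 0 such that for all integers m ≥ K and all reals n with n/m ≥ K the following holds: set k = n/(σ²·m) and let θ₀ ∈ ℓ² be defined by θ₀,ᵢ² = M²·i^{-1-2β} for all integers i ≥ (n/(σ²·√m))^{1/(1+2β)} and θ₀,ᵢ = 0 otherwise. Then for every α with 0 < α < β, h_k(α) := ((1+2α)/(k^{1/(1+2α)}·log k))·Σ_{i=1}^∞ k²·i^{1+2α}·θ₀,ᵢ²·(log i)/(k + i^{1+2α})² ≤ C·M². -/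

import Mathlib

/-!
Above the threshold `i₀ = (k√m)^{1/(1+2β)}` each weight `k² x/(k + x)²` is at most `k`, and
`log i / i^β` is decreasing for `i ≥ e^{1/β}`, so the series is at most
`k M² (log i₀ / i₀^β) Σ_{i ≥ i₀} i^{-1-β}`; telescoping against `i^{-β}/β` bounds it by
`2^β/β · k M² log i₀ · i₀^{-2β}`. Since `i₀^{1+2β} = k√m`, this equals
`2^β/β · M² k^{1/(1+2β)} m^{-β/(1+2β)} (log k + ½ log m)/(1+2β)`. As `α ≤ β` and
`m^{-β/(1+2β)} log m` is bounded, it is `O(k^{1/(1+2α)} log k)`, which the prefactor of `h_k`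
cancels.
-/

/-- The squared coefficients of the 'difficult' signal: `θ₀,ᵢ² = M² i^{-1-2β}` for
integers `i ≥ (n/(σ²√m))^{1/(1+2β)}` and `θ₀,ᵢ = 0` otherwise (coordinate `i : ℕ`
corresponds to the integer `i + 1`). -/
noncomputable def counterSignalSq (σ β M n : ℝ) (m : ℕ) (i : ℕ) : ℝ :=
  if (n / (σ ^ 2 * Real.sqrt (m : ℝ))) ^ (1 / (1 + 2 * β)) ≤ (i : ℝ) + 1 then
    M ^ 2 * ((i : ℝ) + 1) ^ (-1 - 2 * β)
  else 0

/-- The marginal-likelihood functional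
`h_k(α) = ((1+2α)/(k^{1/(1+2α)} log k)) Σᵢ k² i^{1+2α} θ₀,ᵢ² (log i)/(k + i^{1+2α})²`. -/
noncomputable def hFun (σ β M n : ℝ) (m : ℕ) (α : ℝ) : ℝ :=
  let k := n / (σ ^ 2 * (m : ℝ))
  ((1 + 2 * α) / (k ^ (1 / (1 + 2 * α)) * Real.log k)) *
    ∑' i : ℕ, k ^ 2 * ((i : ℝ) + 1) ^ (1 + 2 * α) * counterSignalSq σ β M n m i
      * Real.log ((i : ℝ) + 1) / (k + ((i : ℝ) + 1) ^ (1 + 2 * α)) ^ 2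

open Real

lemma summable_and_tsum_le_of_le_sub_succ {f G : ℕ → ℝ} (hf : ∀ i, 0 ≤ f i)
    (hG : ∀ i, 0 ≤ G i) (h : ∀ i, f i ≤ G i - G (i + 1)) :
    Summable f ∧ ∑' i, f i ≤ G 0 := by
  have hsum : ∀ n, ∑ i ∈ Finset.range n, f i ≤ G 0 := fun n =>
    calc ∑ i ∈ Finset.range n, f i ≤ ∑ i ∈ Finset.range n, (G i - G (i + 1)) :=
          Finset.sum_le_sum fun i _ => h i
      _ = G 0 - G n := Finset.sum_range_sub' G n
      _ ≤ G 0 := sub_le_self _ (hG n)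
  exact ⟨summable_of_sum_range_le hf hsum, Real.tsum_le_of_sum_range_le hf hsum⟩

lemma mul_rpow_neg_one_sub_le_rpow_neg_sub {x s : ℝ} (hx : 0 < x) (hs : 0 < s) :
    s * (x + 1) ^ (-1 - s) ≤ x ^ (-s) - (x + 1) ^ (-s) := by
  have hx1 : 0 < x + 1 := by linarith
  have hlog : (x + 1)⁻¹ ≤ log ((x + 1) / x) := by
    have := one_sub_inv_le_log_of_pos (div_pos hx1 hx)
    rwa [inv_div, one_sub_div hx1.ne', add_sub_cancel_left, one_div] at this
  have hpow : 1 + s * (x + 1)⁻¹ ≤ ((x + 1) / x) ^ s := by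
    rw [rpow_def_of_pos (div_pos hx1 hx)]
    nlinarith [add_one_le_exp (log ((x + 1) / x) * s)]
  have hsplit : x ^ (-s) = (x + 1) ^ (-s) * ((x + 1) / x) ^ s := by
    rw [div_rpow hx1.le hx.le, rpow_neg hx.le, rpow_neg hx1.le]
    field_simp
  have hsub : (x + 1) ^ (-1 - s) = (x + 1) ^ (-s) * (x + 1)⁻¹ := by
    rw [show -1 - s = -s + -1 by ring, rpow_add hx1, rpow_neg_one]
  rw [hsplit, hsub]
  nlinarith [mul_le_mul_of_nonneg_left hpow (rpow_nonneg hx1.le (-s))]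

lemma rpow_neg_one_sub_two_mul_mul_log_le {β a x : ℝ} (hβ : 0 < β) (hae : exp β⁻¹ ≤ a)
    (hx : 0 < x) (hax : a ≤ x + 1) :
    (x + 1) ^ (-1 - 2 * β) * log (x + 1) ≤ log a / a ^ β / β * (x ^ (-β) - (x + 1) ^ (-β)) := by
  have hx1 : 0 < x + 1 := by linarith
  have hsplit : (x + 1) ^ (-1 - 2 * β) * log (x + 1) =
      (x + 1) ^ (-1 - β) * (log (x + 1) / (x + 1) ^ β) := by
    rw [show -1 - 2 * β = -1 - β + -β by ring, rpow_add hx1, rpow_neg hx1.le]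
    ring
  have hmono : log (x + 1) / (x + 1) ^ β ≤ log a / a ^ β :=
    log_div_self_rpow_antitoneOn hβ hae (hae.trans hax) hax
  have ha0 : 0 < a := (exp_pos _).trans_le hae
  have hlog : 0 ≤ log a := log_nonneg ((one_le_exp (inv_nonneg.2 hβ.le)).trans hae)
  have hstep := mul_rpow_neg_one_sub_le_rpow_neg_sub hx hβ
  rw [hsplit]
  calc (x + 1) ^ (-1 - β) * (log (x + 1) / (x + 1) ^ β)
      ≤ (x + 1) ^ (-1 - β) * (log a / a ^ β) := by gcongr
    _ = log a / a ^ β / β * (β * (x + 1) ^ (-1 - β)) := by field_simp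
    _ ≤ log a / a ^ β / β * (x ^ (-β) - (x + 1) ^ (-β)) := by gcongr

noncomputable def powLogTail (β a : ℝ) (i : ℕ) : ℝ :=
  if a ≤ (i : ℝ) + 1 then ((i : ℝ) + 1) ^ (-1 - 2 * β) * log ((i : ℝ) + 1) else 0

lemma powLogTail_nonneg (β a : ℝ) (i : ℕ) : 0 ≤ powLogTail β a i := by
  unfold powLogTail
  split_ifs
  exacts [mul_nonneg (by positivity) (log_nonneg (by simp)), le_rfl]

lemma summable_powLogTail_and_tsum_le {β a : ℝ} (hβ : 0 < β) (ha : 2 ≤ a)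
    (hae : exp β⁻¹ ≤ a) :
    Summable (powLogTail β a) ∧ ∑' i, powLogTail β a i ≤ 2 ^ β / β * log a * a ^ (-2 * β) := by
  have ha0 : 0 < a := by linarith
  have hL : 0 ≤ log a / a ^ β / β :=
    div_nonneg (div_nonneg (log_nonneg (by linarith)) (by positivity)) hβ.le
  set G : ℕ → ℝ := fun i => log a / a ^ β / β * max (i : ℝ) (a - 1) ^ (-β) with hG
  have hterm (i : ℕ) : powLogTail β a i ≤ G i - G (i + 1) := by
    simp only [powLogTail, hG, Nat.cast_add, Nat.cast_one]
    split_ifs with hai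
    · rw [max_eq_left (by linarith), max_eq_left (by linarith), ← mul_sub]
      exact rpow_neg_one_sub_two_mul_mul_log_le hβ hae (by linarith) hai
    · have hmax : 0 < max (i : ℝ) (a - 1) := lt_max_of_lt_right (by linarith)
      exact sub_nonneg.2 <| mul_le_mul_of_nonneg_left (rpow_le_rpow_of_nonpos hmax
        (max_le_max (by linarith) le_rfl) (by linarith)) hL
  obtain ⟨hsummable, htsum⟩ := summable_and_tsum_le_of_le_sub_succ
    (powLogTail_nonneg β a) (fun i => by positivity) hterm
  refine ⟨hsummable, htsum.trans ?_⟩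
  calc G 0 = log a / a ^ β / β * (a - 1) ^ (-β) := by
        simp [hG, max_eq_right (by linarith : (0 : ℝ) ≤ a - 1)]
    _ ≤ log a / a ^ β / β * (a / 2) ^ (-β) := mul_le_mul_of_nonneg_left
        (rpow_le_rpow_of_nonpos (by positivity) (by linarith) (by linarith)) hL
    _ = 2 ^ β / β * log a * a ^ (-2 * β) := by
      rw [div_rpow ha0.le zero_le_two, rpow_neg zero_le_two, show -2 * β = -β + -β by ring,
        rpow_add ha0, rpow_neg ha0.le]
      field_simp

lemma sq_mul_div_sq_add_le {k y : ℝ} (hk : 0 < k) (hy : 0 ≤ y) :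
    k ^ 2 * y / (k + y) ^ 2 ≤ k := by
  rw [div_le_iff₀ (by positivity)]
  nlinarith [mul_nonneg hk.le (sq_nonneg y), mul_nonneg (mul_nonneg hk.le hk.le) hy]

noncomputable def counterThreshold (σ β n : ℝ) (m : ℕ) : ℝ :=
  (n / (σ ^ 2 * √(m : ℝ))) ^ (1 / (1 + 2 * β))

lemma counterSignalSq_mul_log (σ β M n : ℝ) (m i : ℕ) :
    counterSignalSq σ β M n m i * log ((i : ℝ) + 1) =
      M ^ 2 * powLogTail β (counterThreshold σ β n m) i := by
  unfold counterSignalSq powLogTail counterThreshold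
  split_ifs <;> ring

lemma tsum_counterSeries_le {σ β M n k p : ℝ} {m : ℕ} (hβ : 0 < β) (hk : 0 < k)
    (ha : 2 ≤ counterThreshold σ β n m) (hae : exp β⁻¹ ≤ counterThreshold σ β n m) :
    ∑' i : ℕ, k ^ 2 * ((i : ℝ) + 1) ^ p * counterSignalSq σ β M n m i * log ((i : ℝ) + 1) /
        (k + ((i : ℝ) + 1) ^ p) ^ 2 ≤
      k * M ^ 2 * (2 ^ β / β * log (counterThreshold σ β n m) *
        counterThreshold σ β n m ^ (-2 * β)) := by
  set a := counterThreshold σ β n m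
  obtain ⟨hsum, htsum⟩ := summable_powLogTail_and_tsum_le hβ ha hae
  have hterm (i : ℕ) : k ^ 2 * ((i : ℝ) + 1) ^ p * counterSignalSq σ β M n m i *
      log ((i : ℝ) + 1) / (k + ((i : ℝ) + 1) ^ p) ^ 2 =
      k ^ 2 * ((i : ℝ) + 1) ^ p / (k + ((i : ℝ) + 1) ^ p) ^ 2 * (M ^ 2 * powLogTail β a i) := by
    rw [← counterSignalSq_mul_log]
    ring
  have htail_nonneg (i : ℕ) : 0 ≤ M ^ 2 * powLogTail β a i :=
    mul_nonneg (sq_nonneg M) (powLogTail_nonneg β a i)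
  have hle (i : ℕ) : k ^ 2 * ((i : ℝ) + 1) ^ p * counterSignalSq σ β M n m i *
      log ((i : ℝ) + 1) / (k + ((i : ℝ) + 1) ^ p) ^ 2 ≤ k * M ^ 2 * powLogTail β a i := by
    rw [hterm, mul_assoc k]
    exact mul_le_mul_of_nonneg_right (sq_mul_div_sq_add_le hk (by positivity)) (htail_nonneg i)
  have hnonneg (i : ℕ) : 0 ≤ k ^ 2 * ((i : ℝ) + 1) ^ p * counterSignalSq σ β M n m i *
      log ((i : ℝ) + 1) / (k + ((i : ℝ) + 1) ^ p) ^ 2 := by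
    rw [hterm]
    exact mul_nonneg (by positivity) (htail_nonneg i)
  have hsum' : Summable fun i => k * M ^ 2 * powLogTail β a i := hsum.mul_left _
  calc _ ≤ ∑' i, k * M ^ 2 * powLogTail β a i :=
        Summable.tsum_le_tsum hle (hsum'.of_nonneg_of_le hnonneg hle) hsum'
    _ = k * M ^ 2 * ∑' i, powLogTail β a i := tsum_mul_left
    _ ≤ _ := by gcongr

lemma rpow_neg_mul_add_half_log_le {m t L : ℝ} (hm : 1 ≤ m) (ht : 0 < t) (hL : 1 ≤ L) :
    m ^ (-t) * (L + log m / 2) ≤ (1 + 1 / (2 * t)) * L := by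
  have hm0 : 0 < m := by linarith
  have hdecay : m ^ (-t) ≤ 1 := rpow_le_one_of_one_le_of_nonpos hm (by linarith)
  have hlog : m ^ (-t) * log m ≤ 1 / t :=
    calc m ^ (-t) * log m ≤ m ^ (-t) * (m ^ t / t) :=
          mul_le_mul_of_nonneg_left (log_le_rpow_div hm0.le ht) (by positivity)
      _ = 1 / t := by rw [rpow_neg hm0.le]; field_simp
  have h2t : 1 / (2 * t) ≤ 1 / (2 * t) * L := le_mul_of_one_le_right (by positivity) hL
  have hL' : m ^ (-t) * L ≤ L := mul_le_of_le_one_left (by linarith) hdecay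
  calc m ^ (-t) * (L + log m / 2) = m ^ (-t) * L + m ^ (-t) * log m / 2 := by ring
    _ ≤ (1 + 1 / (2 * t)) * L := by
      have hhalf : m ^ (-t) * log m / 2 ≤ 1 / (2 * t) := by
        rw [show 1 / (2 * t) = 1 / t / 2 by ring]
        linarith
      linarith

lemma counterThreshold_eq (σ β n : ℝ) {m : ℕ} (hm : 0 < (m : ℝ)) :
    counterThreshold σ β n m = (n / (σ ^ 2 * m) * √(m : ℝ)) ^ (1 / (1 + 2 * β)) := by
  have hsqrt : 0 < √(m : ℝ) := sqrt_pos.2 hm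
  unfold counterThreshold
  congr 1
  calc n / (σ ^ 2 * √(m : ℝ)) = n * √(m : ℝ) / (σ ^ 2 * (√(m : ℝ) * √(m : ℝ))) := by
        rw [← mul_assoc, mul_div_mul_right _ _ hsqrt.ne']
    _ = n / (σ ^ 2 * m) * √(m : ℝ) := by rw [mul_self_sqrt hm.le, div_mul_eq_mul_div]

lemma mul_log_mul_rpow_neg_le {k m α β : ℝ} (hk : exp 1 ≤ k) (hm : 1 ≤ m) (hβ : 0 < β)
    (hα : 0 ≤ α) (hαβ : α ≤ β) :
    k * (log ((k * √m) ^ (1 / (1 + 2 * β))) * ((k * √m) ^ (1 / (1 + 2 * β))) ^ (-2 * β)) ≤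
      (1 + 4 * β) / (2 * β * (1 + 2 * β)) * (k ^ (1 / (1 + 2 * α)) * log k) := by
  have hk1 : 1 ≤ k := (one_le_exp zero_le_one).trans hk
  have hk0 : 0 < k := by linarith
  have hm0 : 0 < m := by linarith
  have hT : 0 < k * √m := mul_pos hk0 (sqrt_pos.2 hm0)
  have hlogk : 1 ≤ log k := by simpa using log_le_log (exp_pos 1) hk
  set s := 1 / (1 + 2 * β) with hs
  have hlog : log ((k * √m) ^ s) = s * (log k + log m / 2) := by
    rw [log_rpow hT, log_mul hk0.ne' (sqrt_pos.2 hm0).ne', log_sqrt hm0.le]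
  have hpow : k * ((k * √m) ^ s) ^ (-2 * β) = k ^ s * m ^ (-(β / (1 + 2 * β))) := by
    rw [← rpow_mul hT.le, mul_rpow hk0.le (sqrt_nonneg m), sqrt_eq_rpow, ← rpow_mul hm0.le,
      show s * (-2 * β) = -1 + s by rw [hs]; field_simp; ring, rpow_add hk0, rpow_neg_one,
      show 1 / 2 * (-1 + s) = -(β / (1 + 2 * β)) by rw [hs]; field_simp; ring]
    field_simp
  have hexp : k ^ s ≤ k ^ (1 / (1 + 2 * α)) :=
    rpow_le_rpow_of_exponent_le hk1 (one_div_le_one_div_of_le (by linarith) (by linarith))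
  have hnonneg : 0 ≤ m ^ (-(β / (1 + 2 * β))) * (log k + log m / 2) :=
    mul_nonneg (rpow_nonneg hm0.le _) (by linarith [log_nonneg hm])
  have hm_log := rpow_neg_mul_add_half_log_le hm (by positivity : 0 < β / (1 + 2 * β)) hlogk
  calc k * (log ((k * √m) ^ s) * ((k * √m) ^ s) ^ (-2 * β))
      = s * k ^ s * (m ^ (-(β / (1 + 2 * β))) * (log k + log m / 2)) := by
        rw [hlog, ← mul_assoc, mul_comm k, mul_assoc _ k, hpow]
        ring
    _ ≤ s * k ^ (1 / (1 + 2 * α)) * ((1 + 1 / (2 * (β / (1 + 2 * β)))) * log k) := by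
        gcongr
    _ = (1 + 4 * β) / (2 * β * (1 + 2 * β)) * (k ^ (1 / (1 + 2 * α)) * log k) := by
        rw [hs]
        field_simp
        ring

lemma le_counterThreshold {σ β n X : ℝ} {m : ℕ} (hβ : 0 < β) (hX : 0 ≤ X) (hm : 1 ≤ (m : ℝ))
    (hk : X ^ (1 + 2 * β) ≤ n / (σ ^ 2 * m)) : X ≤ counterThreshold σ β n m := by
  have hk0 : 0 ≤ n / (σ ^ 2 * m) := (rpow_nonneg hX _).trans hk
  rw [counterThreshold_eq σ β n (by linarith)]
  calc X = (X ^ (1 + 2 * β)) ^ (1 / (1 + 2 * β)) := by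
        rw [← rpow_mul hX, mul_one_div_cancel (by positivity), rpow_one]
    _ ≤ (n / (σ ^ 2 * m) * √(m : ℝ)) ^ (1 / (1 + 2 * β)) := by
        gcongr
        exact hk.trans (le_mul_of_one_le_right hk0 (one_le_sqrt.2 hm))

lemma hFun_le_of_large_threshold {σ β M n α : ℝ} {m : ℕ} (hβ : 0 < β) (hα : 0 ≤ α)
    (hαβ : α ≤ β) (hm : 1 ≤ (m : ℝ)) (hk : exp 1 ≤ n / (σ ^ 2 * m))
    (ha : 2 ≤ counterThreshold σ β n m) (hae : exp β⁻¹ ≤ counterThreshold σ β n m) :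
    hFun σ β M n m α ≤ 2 ^ β / β * ((1 + 4 * β) / (2 * β)) * M ^ 2 := by
  set k := n / (σ ^ 2 * m)
  have hk0 : 0 < k := (exp_pos 1).trans_le hk
  have hlogk : 0 < log k := log_pos ((one_lt_exp_iff.2 one_pos).trans_le hk)
  have hseries := tsum_counterSeries_le (M := M) (p := 1 + 2 * α) hβ hk0 ha hae
  rw [counterThreshold_eq σ β n (by linarith)] at hseries
  have hthreshold := mul_log_mul_rpow_neg_le hk hm hβ hα hαβ
  set a := (k * √(m : ℝ)) ^ (1 / (1 + 2 * β))
  set q := k ^ (1 / (1 + 2 * α))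
  have hq : 0 < q := rpow_pos_of_pos hk0 _
  calc hFun σ β M n m α
      ≤ (1 + 2 * α) / (q * log k) * (k * M ^ 2 * (2 ^ β / β * log a * a ^ (-2 * β))) :=
        mul_le_mul_of_nonneg_left hseries (by positivity)
    _ = (1 + 2 * α) * (2 ^ β / β) * M ^ 2 * (k * (log a * a ^ (-2 * β))) / (q * log k) := by
        ring
    _ ≤ (1 + 2 * α) * (2 ^ β / β) * M ^ 2 *
          ((1 + 4 * β) / (2 * β * (1 + 2 * β)) * (q * log k)) / (q * log k) := by
        gcongr
    _ = (1 + 2 * α) / (1 + 2 * β) * (2 ^ β / β * ((1 + 4 * β) / (2 * β)) * M ^ 2) := by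
        field_simp
    _ ≤ 2 ^ β / β * ((1 + 4 * β) / (2 * β)) * M ^ 2 :=
        mul_le_of_le_one_left (by positivity) ((div_le_one (by linarith)).2 (by linarith))

theorem hFun_bound_below_true_smoothness_general
    (σ β M : ℝ) (hσ : 0 < σ) (hβ : 0 < β) :
    ∃ C K : ℝ, 0 < C ∧ 0 < K ∧
      ∀ m : ℕ, K ≤ (m : ℝ) → ∀ n : ℝ, K ≤ n / (m : ℝ) →
        ∀ α : ℝ, 0 < α → α < β →
          hFun σ β M n m α ≤ C * M ^ 2 := by
  set X := 2 + exp β⁻¹ with hX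
  have hX3 : 3 ≤ X := by linarith [one_le_exp (inv_nonneg.2 hβ.le)]
  have hXpow : 0 ≤ σ ^ 2 * X ^ (1 + 2 * β) := by positivity
  refine ⟨2 ^ β / β * ((1 + 4 * β) / (2 * β)), σ ^ 2 * X ^ (1 + 2 * β) + 1, by positivity,
    by positivity, fun m hm n hn α hα hαβ => ?_⟩
  have hk : X ^ (1 + 2 * β) ≤ n / (σ ^ 2 * m) := by
    rw [show n / (σ ^ 2 * m) = n / m / σ ^ 2 by rw [div_div, mul_comm (m : ℝ)],
      le_div_iff₀ (by positivity)]
    linarith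
  have hXk : X ≤ n / (σ ^ 2 * m) :=
    (self_le_rpow_of_one_le (by linarith : 1 ≤ X) (by linarith)).trans hk
  have ha := le_counterThreshold hβ (by linarith) (by linarith) hk
  exact hFun_le_of_large_threshold hβ hα.le hαβ.le (by linarith)
    (by linarith [exp_one_lt_d9.trans (by norm_num : (2.7182818286 : ℝ) < 3)]) (by linarith)
    (by linarith)

/-- Bound on the marginal-likelihood functional below the true smoothness (used in
Lemma 1): for every `σ, β, M > 0` there exist `C > 0` and `K > 0` such that for all
integers `m ≥ K` and all reals `n` with `n/m ≥ K`, for every `0 < α < β` one has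
`h_k(α) ≤ C M²`, where `k = n/(σ² m)` and `θ₀` is the difficult signal. -/
theorem hFun_bound_below_true_smoothness
    (σ β M : ℝ) (hσ : 0 < σ) (hβ : 0 < β) (hM : 0 < M) :
    ∃ C K : ℝ, 0 < C ∧ 0 < K ∧
      ∀ m : ℕ, K ≤ (m : ℝ) → ∀ n : ℝ, K ≤ n / (m : ℝ) →
        ∀ α : ℝ, 0 < α → α < β →
          hFun σ β M n m α ≤ C * M ^ 2 :=
  hFun_bound_below_true_smoothness_general σ β M hσ hβ
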